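/- Let n ≥ 1, let G ∈ ℝ^{n×n} be a constant symmetric positive definite matrix, B : ℝⁿ × ℝⁿ → ℝ^{n×n} with B(x,v) positive semidefinite for all (x,v), Φ : ℝⁿ → ℝ differentiable, and w : ℝⁿ → ℝ differentiable with w(x) > 0. Define L(x,v) = (1/2)vᵀGv - Φ(x) and the correction term h(x,v) = L(x,v)∇w(x) - (vᵀ∇w(x)) G v. Suppose a twice-differentiable trajectory x(t) satisfies w(x) G ẍ = w(x)(-∇Φ(x) - B(x,ẋ)ẋ) + h(x,ẋ). Then the weighted Lyapunov function V(t) = w(x(t)) [ (1/2)ẋ(t)ᵀGẋ(t) + Φ(x(t)) ] satisfies V̇(t) = -w(x(t)) ẋ(t)ᵀB(x(t),ẋ(t))ẋ(t) ≤ 0. -/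

import Mathlib

open Matrix

/-!
Along a trajectory, `d/dt [w E] = ẇ E + w Ė` with `E = ½ẋᵀGẋ + Φ`. Pairing the dynamics with
`ẋ` gives `w Ė = -w ẋᵀBẋ + ẋᵀh`, and the correction force is built so that its power
`ẋᵀh = (L - ẋᵀGẋ) ẇ = -E ẇ` cancels exactly the change `ẇ E` of the weight. What remains is the
damping power `-w ẋᵀBẋ`, which is nonpositive since `w > 0` and `B ⪰ 0`.
-/

section Calculus

variable {𝕜 ι : Type*} [NontriviallyNormedField 𝕜] [Fintype ι] {t : 𝕜}

theorem HasDerivAt.dotProduct {f g : 𝕜 → ι → 𝕜} {f' g' : ι → 𝕜}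
    (hf : HasDerivAt f f' t) (hg : HasDerivAt g g' t) :
    HasDerivAt (fun s => f s ⬝ᵥ g s) (f' ⬝ᵥ g t + f t ⬝ᵥ g') t := by
  simp only [_root_.dotProduct, ← Finset.sum_add_distrib]
  exact HasDerivAt.fun_sum fun i _ => (hasDerivAt_pi.mp hf i).mul (hasDerivAt_pi.mp hg i)

theorem HasDerivAt.mulVec {κ : Type*} (A : Matrix κ ι 𝕜) {f : 𝕜 → ι → 𝕜} {f' : ι → 𝕜}
    (hf : HasDerivAt f f' t) : HasDerivAt (fun s => A *ᵥ f s) (A *ᵥ f') t :=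
  hasDerivAt_pi.mpr fun i => by
    simpa [Matrix.mulVec] using (hasDerivAt_const t (A i)).dotProduct hf

theorem HasDerivAt.dotProduct_mulVec_self {A : Matrix ι ι 𝕜} (hA : A.IsSymm)
    {f : 𝕜 → ι → 𝕜} {f' : ι → 𝕜} (hf : HasDerivAt f f' t) :
    HasDerivAt (fun s => f s ⬝ᵥ (A *ᵥ f s)) (2 * (f t ⬝ᵥ (A *ᵥ f'))) t := by
  have hcomm : f' ⬝ᵥ (A *ᵥ f t) = f t ⬝ᵥ (A *ᵥ f') := by
    rw [dotProduct_mulVec, ← mulVec_transpose, hA.eq, dotProduct_comm]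
  convert hf.dotProduct (hf.mulVec A) using 1
  rw [hcomm, two_mul]

theorem HasDerivAt.comp_of_fderiv_eq_dotProduct {φ : (ι → 𝕜) → 𝕜} {grad : ι → 𝕜}
    {f : 𝕜 → ι → 𝕜} {f' : ι → 𝕜} (hφ : DifferentiableAt 𝕜 φ (f t))
    (hgrad : ∀ u, fderiv 𝕜 φ (f t) u = grad ⬝ᵥ u) (hf : HasDerivAt f f' t) :
    HasDerivAt (fun s => φ (f s)) (grad ⬝ᵥ f') t := by
  simpa [Function.comp_def, hgrad] using hφ.hasFDerivAt.comp_hasDerivAt t hf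

end Calculus

noncomputable section Fusion

variable {ι : Type*} [Fintype ι] (G : Matrix ι ι ℝ) (Φ : (ι → ℝ) → ℝ)

def lagrangian (y u : ι → ℝ) : ℝ := 1 / 2 * (u ⬝ᵥ (G *ᵥ u)) - Φ y

def energy (y u : ι → ℝ) : ℝ := 1 / 2 * (u ⬝ᵥ (G *ᵥ u)) + Φ y

/-- The correction force `h` of the modified pullback for the weight `w`. -/
def fusionCorrection (gradw : (ι → ℝ) → ι → ℝ) (y u : ι → ℝ) : ι → ℝ :=
  lagrangian G Φ y u • gradw y - (u ⬝ᵥ gradw y) • (G *ᵥ u)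

theorem dotProduct_fusionCorrection (gradw : (ι → ℝ) → ι → ℝ) (y u : ι → ℝ) :
    u ⬝ᵥ fusionCorrection G Φ gradw y u = -(energy G Φ y u * (gradw y ⬝ᵥ u)) := by
  simp only [fusionCorrection, lagrangian, energy, dotProduct_sub, dotProduct_smul, smul_eq_mul,
    dotProduct_comm u (gradw y)]
  ring

variable {G Φ}

theorem hasDerivAt_energy (hG : G.IsSymm) {gradΦ : ι → ℝ} {x v : ℝ → ι → ℝ} {a : ι → ℝ} {t : ℝ}
    (hΦ : DifferentiableAt ℝ Φ (x t)) (hgradΦ : ∀ u, fderiv ℝ Φ (x t) u = gradΦ ⬝ᵥ u)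
    (hx : HasDerivAt x (v t) t) (hv : HasDerivAt v a t) :
    HasDerivAt (fun s => energy G Φ (x s) (v s)) (v t ⬝ᵥ (G *ᵥ a) + gradΦ ⬝ᵥ v t) t := by
  unfold energy
  exact (((hv.dotProduct_mulVec_self hG).const_mul (1 / 2 : ℝ)).fun_add
    (hx.comp_of_fderiv_eq_dotProduct hΦ hgradΦ)).congr_deriv (by ring)

theorem weighted_power_balance {gradΦ gradw : (ι → ℝ) → ι → ℝ} {B : Matrix ι ι ℝ} {c : ℝ}
    {y u a : ι → ℝ}
    (hdyn : c • (G *ᵥ a) = c • (-(gradΦ y) - B *ᵥ u) + fusionCorrection G Φ gradw y u) :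
    (gradw y ⬝ᵥ u) * energy G Φ y u + c * (u ⬝ᵥ (G *ᵥ a) + gradΦ y ⬝ᵥ u)
      = -(c * (u ⬝ᵥ (B *ᵥ u))) := by
  have hpower := congrArg (u ⬝ᵥ ·) hdyn
  simp only [dotProduct_add, dotProduct_smul, dotProduct_sub, dotProduct_neg, smul_eq_mul,
    dotProduct_fusionCorrection, dotProduct_comm u (gradΦ y)] at hpower
  linear_combination hpower

end Fusion

theorem rmpfusion_single_node_stability_general {n : ℕ}
    (G : Matrix (Fin n) (Fin n) ℝ) (hG : G.PosDef)
    (B : (Fin n → ℝ) → (Fin n → ℝ) → Matrix (Fin n) (Fin n) ℝ)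
    (hB : ∀ y u, (B y u).PosSemidef)
    (Φ w : (Fin n → ℝ) → ℝ)
    (gradΦ gradw : (Fin n → ℝ) → (Fin n → ℝ))
    (hΦ : Differentiable ℝ Φ)
    (hgradΦ : ∀ y u, fderiv ℝ Φ y u = gradΦ y ⬝ᵥ u)
    (hw : Differentiable ℝ w)
    (hgradw : ∀ y u, fderiv ℝ w y u = gradw y ⬝ᵥ u)
    (hwpos : ∀ y, 0 < w y)
    (x v a : ℝ → (Fin n → ℝ))
    (hx : ∀ t, HasDerivAt x (v t) t)
    (hv : ∀ t, HasDerivAt v (a t) t)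
    -- dynamics: w(x) G ẍ = w(x)(-∇Φ(x) - B(x,ẋ)ẋ) + h(x,ẋ),
    -- with h(x,v) = L(x,v)∇w(x) - (vᵀ∇w(x)) G v and L(x,v) = ½vᵀGv - Φ(x)
    (hdyn : ∀ t,
      w (x t) • (G *ᵥ a t) =
        w (x t) • (-(gradΦ (x t)) - B (x t) (v t) *ᵥ v t)
          + (((1 / 2 : ℝ) * (v t ⬝ᵥ (G *ᵥ v t)) - Φ (x t)) • gradw (x t)
              - (v t ⬝ᵥ gradw (x t)) • (G *ᵥ v t))) :
    ∀ t,
      HasDerivAt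
        (fun s => w (x s) * ((1 / 2 : ℝ) * (v s ⬝ᵥ (G *ᵥ v s)) + Φ (x s)))
        (-(w (x t) * (v t ⬝ᵥ (B (x t) (v t) *ᵥ v t)))) t
      ∧ -(w (x t) * (v t ⬝ᵥ (B (x t) (v t) *ᵥ v t))) ≤ 0 := by
  intro t
  have hGsymm : G.IsSymm := isHermitian_iff_isSymm.mp hG.isHermitian
  have hW := (hx t).comp_of_fderiv_eq_dotProduct (hw _) (hgradw _)
  have hE := hasDerivAt_energy hGsymm (hΦ _) (hgradΦ _) (hx t) (hv t)
  have hdamping : 0 ≤ v t ⬝ᵥ (B (x t) (v t) *ᵥ v t) := by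
    simpa using (hB (x t) (v t)).dotProduct_mulVec_nonneg (v t)
  refine ⟨?_, neg_nonpos.mpr (mul_nonneg (hwpos _).le hdamping)⟩
  rw [← weighted_power_balance (hdyn t)]
  exact hW.mul hE

/-- Single-node RMPfusion stability: for a child GDS with constant metric `G`,
damping `B`, potential `Φ`, fused with a positive weight function `w` via the
correction force `h = L∇w - (ẋᵀ∇w)Gẋ` with `L = ½ẋᵀGẋ - Φ`, the reshaped
energy `V = w(x)(½ẋᵀGẋ + Φ(x))` satisfies `V̇ = -w(x) ẋᵀBẋ ≤ 0`. -/
theorem rmpfusion_single_node_stability {n : ℕ} (hn : 1 ≤ n)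
    (G : Matrix (Fin n) (Fin n) ℝ) (hG : G.PosDef)
    (B : (Fin n → ℝ) → (Fin n → ℝ) → Matrix (Fin n) (Fin n) ℝ)
    (hB : ∀ y u, (B y u).PosSemidef)
    (Φ w : (Fin n → ℝ) → ℝ)
    (gradΦ gradw : (Fin n → ℝ) → (Fin n → ℝ))
    (hΦ : Differentiable ℝ Φ)
    (hgradΦ : ∀ y u, fderiv ℝ Φ y u = gradΦ y ⬝ᵥ u)
    (hw : Differentiable ℝ w)
    (hgradw : ∀ y u, fderiv ℝ w y u = gradw y ⬝ᵥ u)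
    (hwpos : ∀ y, 0 < w y)
    (x v a : ℝ → (Fin n → ℝ))
    (hx : ∀ t, HasDerivAt x (v t) t)
    (hv : ∀ t, HasDerivAt v (a t) t)
    -- dynamics: w(x) G ẍ = w(x)(-∇Φ(x) - B(x,ẋ)ẋ) + h(x,ẋ),
    -- with h(x,v) = L(x,v)∇w(x) - (vᵀ∇w(x)) G v and L(x,v) = ½vᵀGv - Φ(x)
    (hdyn : ∀ t,
      w (x t) • (G *ᵥ a t) =
        w (x t) • (-(gradΦ (x t)) - B (x t) (v t) *ᵥ v t)
          + (((1 / 2 : ℝ) * (v t ⬝ᵥ (G *ᵥ v t)) - Φ (x t)) • gradw (x t)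
              - (v t ⬝ᵥ gradw (x t)) • (G *ᵥ v t))) :
    ∀ t,
      HasDerivAt
        (fun s => w (x s) * ((1 / 2 : ℝ) * (v s ⬝ᵥ (G *ᵥ v s)) + Φ (x s)))
        (-(w (x t) * (v t ⬝ᵥ (B (x t) (v t) *ᵥ v t)))) t
      ∧ -(w (x t) * (v t ⬝ᵥ (B (x t) (v t) *ᵥ v t))) ≤ 0 :=
  rmpfusion_single_node_stability_general G hG B hB Φ w gradΦ gradw hΦ hgradΦ hw hgradw hwpos x v a
    hx hv hdyn
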